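/- Let Γ be the subgroup of SU(2) generated by a = !![ζ, 0; 0, conj ζ] (where ζ = exp(πi/3)) and b = !![0, i; i, 0]. For A ∈ SU(2) with matrix entries A₀₀, A₀₁, A₁₀, A₁₁, the following are equivalent: (1) there exists λ ∈ ℂ such that (x·A₀₀ + y·A₁₀)^3 + (x·A₀₁ + y·A₁₁)^3 = λ·(x^3 + y^3) for all x, y ∈ ℂ; (2) A ∈ Γ. In other words, the stabilizer in SU(2) of the point of ℂP³ given by the binary cubic x³ + y³ is exactly Γ. -/

import Mathlib

open Matrix

/-- The special unitary group is a group (inverse given by conjugate transpose). -/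
noncomputable instance specialUnitaryGroup.instGroup (n : Type*) [DecidableEq n] [Fintype n] :
    Group (Matrix.specialUnitaryGroup n ℂ) where
  inv A := ⟨star A.1, by
    obtain ⟨hu, hd⟩ := (Matrix.mem_specialUnitaryGroup_iff).mp A.2
    refine (Matrix.mem_specialUnitaryGroup_iff).mpr ⟨Unitary.star_mem hu, ?_⟩
    rw [Matrix.star_eq_conjTranspose, Matrix.det_conjTranspose, hd]
    simp⟩
  inv_mul_cancel A := by
    ext1
    exact ((Matrix.mem_specialUnitaryGroup_iff).mp A.2).1.1

/-- ζ = exp(πi/3) -/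
noncomputable def zeta : ℂ := Complex.exp ((Real.pi : ℂ) * Complex.I / 3)

/-- The matrix a = !![ζ, 0; 0, conj ζ]. -/
noncomputable def aMat : Matrix (Fin 2) (Fin 2) ℂ := !![zeta, 0; 0, (starRingEnd ℂ) zeta]

/-- The matrix b = !![0, i; i, 0]. -/
def bMat : Matrix (Fin 2) (Fin 2) ℂ := !![0, Complex.I; Complex.I, 0]

lemma hz3 : zeta ^ 3 = -1 := by
  rw [zeta, ← Complex.exp_nat_mul]
  norm_num
  rw [show (3:ℂ) * (↑Real.pi * Complex.I / 3) = ↑Real.pi * Complex.I by ring,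
    Complex.exp_pi_mul_I]

lemma hzc : zeta * (starRingEnd ℂ) zeta = 1 := by
  rw [zeta, ← Complex.exp_conj, ← Complex.exp_add]
  rw [show (starRingEnd ℂ) ((Real.pi:ℂ) * Complex.I / 3) = -((Real.pi:ℂ) * Complex.I / 3) by
    have h3 : (starRingEnd ℂ) (3:ℂ) = 3 := Complex.conj_ofNat 3
    simp [map_div₀, Complex.conj_I, Complex.conj_ofReal, h3]
    ring]
  simp

lemma hzre : zeta.re = 1/2 := by
  have h : zeta = Complex.exp ((Real.pi/3 : ℝ) * Complex.I) := by
    rw [zeta]; push_cast; ring_nf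
  rw [h, Complex.exp_ofReal_mul_I_re, Real.cos_pi_div_three]

lemma hz2 : zeta ^ 2 - zeta + 1 = 0 := by
  have h1 : (zeta + 1) * (zeta ^ 2 - zeta + 1) = 0 := by
    linear_combination hz3
  rcases mul_eq_zero.mp h1 with h | h
  · exfalso
    have := congrArg Complex.re h
    simp [Complex.add_re, hzre] at this
    norm_num at this
  · exact h

lemma hz6 : zeta ^ 6 = 1 := by linear_combination (zeta^3 - 1) * hz3
lemma hs : 1 + zeta ^ 2 + zeta ^ 4 = 0 := by linear_combination (zeta^2 + zeta + 1) * hz2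
lemma hzc3 : (starRingEnd ℂ) zeta ^ 3 = -1 := by
  rw [← map_pow, hz3]; simp

lemma aPow (k : ℕ) : aMat ^ k = !![zeta ^ k, 0; 0, ((starRingEnd ℂ) zeta) ^ k] := by
  induction k with
  | zero => simp [Matrix.one_fin_two]
  | succ n ih =>
    rw [pow_succ, ih, aMat, Matrix.mul_fin_two]
    ring_nf

lemma haMem : aMat ∈ Matrix.specialUnitaryGroup (Fin 2) ℂ := by
  rw [Matrix.mem_specialUnitaryGroup_iff]
  constructor
  · rw [Matrix.mem_unitaryGroup_iff]
    ext i j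
    fin_cases i <;> fin_cases j <;>
      simp [aMat, Matrix.mul_apply, Fin.sum_univ_two, Matrix.one_apply, Matrix.star_apply] <;>
      · try linear_combination hzc
  · simp [aMat, Matrix.det_fin_two_of]
    linear_combination hzc

lemma hbMem : bMat ∈ Matrix.specialUnitaryGroup (Fin 2) ℂ := by
  rw [Matrix.mem_specialUnitaryGroup_iff]
  constructor
  · rw [Matrix.mem_unitaryGroup_iff]
    ext i j
    fin_cases i <;> fin_cases j <;>
      simp [bMat, Matrix.mul_apply, Fin.sum_univ_two, Matrix.one_apply, Matrix.star_apply,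
        Complex.conj_I]
  · simp [bMat, Matrix.det_fin_two_of]

abbrev SU2 := Matrix.specialUnitaryGroup (Fin 2) ℂ

/-- coercion of powers -/
lemma coePow (g : SU2) (k : ℕ) : ((g ^ k : SU2) : Matrix (Fin 2) (Fin 2) ℂ) = (g : Matrix (Fin 2) (Fin 2) ℂ) ^ k := by
  exact SubmonoidClass.coe_pow g k

/-- The stabilizer predicate. -/
def Stab (A : SU2) : Prop :=
  ∃ l : ℂ, ∀ x y : ℂ,
    (x * (A : Matrix (Fin 2) (Fin 2) ℂ) 0 0 + y * (A : Matrix (Fin 2) (Fin 2) ℂ) 1 0) ^ 3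
      + (x * (A : Matrix (Fin 2) (Fin 2) ℂ) 0 1 + y * (A : Matrix (Fin 2) (Fin 2) ℂ) 1 1) ^ 3
      = l * (x ^ 3 + y ^ 3)

lemma stab_a : Stab ⟨aMat, haMem⟩ := by
  refine ⟨-1, fun x y => ?_⟩
  show (x * zeta + y * 0) ^ 3 + (x * 0 + y * (starRingEnd ℂ) zeta) ^ 3 = _
  linear_combination x^3 * hz3 + y^3 * hzc3

lemma stab_b : Stab ⟨bMat, hbMem⟩ := by
  refine ⟨-Complex.I, fun x y => ?_⟩
  show (x * 0 + y * Complex.I) ^ 3 + (x * Complex.I + y * 0) ^ 3 = _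
  linear_combination (x^3 + y^3) * Complex.I * Complex.I_sq

lemma stab_one : Stab 1 := by
  refine ⟨1, fun x y => ?_⟩
  show (x * (1 : Matrix (Fin 2) (Fin 2) ℂ) 0 0 + y * (1 : Matrix (Fin 2) (Fin 2) ℂ) 1 0) ^ 3
      + _ = _
  simp [Matrix.one_apply]

lemma stab_mul (A B : SU2) (hA : Stab A) (hB : Stab B) : Stab (A * B) := by
  obtain ⟨l, hl⟩ := hA
  obtain ⟨m, hm⟩ := hB
  refine ⟨m * l, fun x y => ?_⟩
  have e := hm (x * (A : Matrix (Fin 2) (Fin 2) ℂ) 0 0 + y * (A : Matrix (Fin 2) (Fin 2) ℂ) 1 0)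
    (x * (A : Matrix (Fin 2) (Fin 2) ℂ) 0 1 + y * (A : Matrix (Fin 2) (Fin 2) ℂ) 1 1)
  have f := hl x y
  show (x * ((A : Matrix (Fin 2) (Fin 2) ℂ) * B) 0 0 + y * ((A : Matrix (Fin 2) (Fin 2) ℂ) * B) 1 0) ^ 3
      + (x * ((A : Matrix (Fin 2) (Fin 2) ℂ) * B) 0 1 + y * ((A : Matrix (Fin 2) (Fin 2) ℂ) * B) 1 1) ^ 3
      = m * l * (x ^ 3 + y ^ 3)
  simp only [Matrix.mul_apply, Fin.sum_univ_two]
  linear_combination e + m * f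

lemma stab_inv (A : SU2) (hA : Stab A) : Stab A⁻¹ := by
  obtain ⟨l, hl⟩ := hA
  set α := (A : Matrix (Fin 2) (Fin 2) ℂ) 0 0 with hα
  set β := (A : Matrix (Fin 2) (Fin 2) ℂ) 0 1 with hβ
  set γ := (A : Matrix (Fin 2) (Fin 2) ℂ) 1 0 with hγ
  set δ := (A : Matrix (Fin 2) (Fin 2) ℂ) 1 1 with hδ
  have hu : star (A : Matrix (Fin 2) (Fin 2) ℂ) * A = 1 :=
    (Matrix.mem_unitaryGroup_iff').mp (Matrix.mem_specialUnitaryGroup_iff.mp A.2).1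
  have u00 : (starRingEnd ℂ) α * α + (starRingEnd ℂ) γ * γ = 1 := by
    have := congrFun (congrFun hu 0) 0
    simpa [Matrix.mul_apply, Fin.sum_univ_two, Matrix.star_apply, Matrix.one_apply] using this
  have u01 : (starRingEnd ℂ) α * β + (starRingEnd ℂ) γ * δ = 0 := by
    have := congrFun (congrFun hu 0) 1
    simpa [Matrix.mul_apply, Fin.sum_univ_two, Matrix.star_apply, Matrix.one_apply] using this
  have u10 : (starRingEnd ℂ) β * α + (starRingEnd ℂ) δ * γ = 0 := by
    have := congrFun (congrFun hu 1) 0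
    simpa [Matrix.mul_apply, Fin.sum_univ_two, Matrix.star_apply, Matrix.one_apply] using this
  have u11 : (starRingEnd ℂ) β * β + (starRingEnd ℂ) δ * δ = 1 := by
    have := congrFun (congrFun hu 1) 1
    simpa [Matrix.mul_apply, Fin.sum_univ_two, Matrix.star_apply, Matrix.one_apply] using this
  -- l ≠ 0
  have hlne : l ≠ 0 := by
    intro h0
    have := hl ((starRingEnd ℂ) α) ((starRingEnd ℂ) γ)
    rw [h0, zero_mul] at this
    rw [u00] at this
    rw [u01] at this
    norm_num at this
  have hcoe : ((A⁻¹ : SU2) : Matrix (Fin 2) (Fin 2) ℂ) = star (A : Matrix (Fin 2) (Fin 2) ℂ) := rfl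
  refine ⟨l⁻¹, fun x y => ?_⟩
  rw [hcoe]
  simp only [Matrix.star_apply, Complex.star_def, ← hα, ← hβ, ← hγ, ← hδ]
  have hxy := hl (x * (starRingEnd ℂ) α + y * (starRingEnd ℂ) β)
    (x * (starRingEnd ℂ) γ + y * (starRingEnd ℂ) δ)
  have hx : (x * (starRingEnd ℂ) α + y * (starRingEnd ℂ) β) * α
      + (x * (starRingEnd ℂ) γ + y * (starRingEnd ℂ) δ) * γ = x := by
    linear_combination x * u00 + y * u10
  have hy : (x * (starRingEnd ℂ) α + y * (starRingEnd ℂ) β) * β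
      + (x * (starRingEnd ℂ) γ + y * (starRingEnd ℂ) δ) * δ = y := by
    linear_combination x * u01 + y * u11
  rw [hx, hy] at hxy
  rw [inv_mul_eq_div, eq_div_iff hlne]
  linear_combination -hxy

lemma stab_mem (A : SU2) (h : Stab A) :
    A ∈ Subgroup.closure ({⟨aMat, haMem⟩, ⟨bMat, hbMem⟩} : Set SU2) := by
  obtain ⟨l, hl⟩ := h
  set Γ := Subgroup.closure ({⟨aMat, haMem⟩, ⟨bMat, hbMem⟩} : Set SU2) with hΓ
  have haΓ : (⟨aMat, haMem⟩ : SU2) ∈ Γ := Subgroup.subset_closure (Set.mem_insert _ _)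
  have hbΓ : (⟨bMat, hbMem⟩ : SU2) ∈ Γ := Subgroup.subset_closure (Set.mem_insert_of_mem _ rfl)
  set c := starRingEnd ℂ with hc
  set α := (A : Matrix (Fin 2) (Fin 2) ℂ) 0 0 with hαd
  set β := (A : Matrix (Fin 2) (Fin 2) ℂ) 0 1 with hβd
  obtain ⟨hu, hdet⟩ := Matrix.mem_specialUnitaryGroup_iff.mp A.2
  have hAs : (A : Matrix (Fin 2) (Fin 2) ℂ) * star (A : Matrix (Fin 2) (Fin 2) ℂ) = 1 :=
    Matrix.mem_unitaryGroup_iff.mp hu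
  have hstar : star (A : Matrix (Fin 2) (Fin 2) ℂ)
      = Matrix.adjugate (A : Matrix (Fin 2) (Fin 2) ℂ) := by
    rw [← Matrix.inv_eq_right_inv hAs, Matrix.inv_def, hdet]
    simp
  have hd : (A : Matrix (Fin 2) (Fin 2) ℂ) 1 1 = c α := by
    have h00 := congrFun (congrFun hstar 0) 0
    rw [Matrix.adjugate_fin_two] at h00
    simpa [Matrix.star_apply, Complex.star_def, hc] using h00.symm
  have hg : (A : Matrix (Fin 2) (Fin 2) ℂ) 1 0 = -(c β) := by
    have h01 := congrFun (congrFun hstar 0) 1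
    rw [Matrix.adjugate_fin_two] at h01
    simp only [Matrix.star_apply, Complex.star_def] at h01
    have := congrArg c h01
    simpa [hc] using this
  have hn : α * c α + β * c β = 1 := by
    have h00 := congrFun (congrFun hAs 0) 0
    simpa [Matrix.mul_apply, Fin.sum_univ_two, Matrix.star_apply, Complex.star_def,
      Matrix.one_apply, hc] using h00
  simp only [hd, hg] at hl
  have h1 := hl 1 0
  have h0 := hl 0 1
  have hp := hl 1 1
  have hm := hl 1 (-1)
  have e1 : α ^ 3 + β ^ 3 = l := by linear_combination h1
  have e0 : -(c β) ^ 3 + (c α) ^ 3 = l := by linear_combination h0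
  have E1 : α ^ 2 * (-(c β)) + β ^ 2 * (c α) = 0 := by
    linear_combination hp / 6 - hm / 6 - h0 / 3
  have E2 : α * (c β) ^ 2 + β * (c α) ^ 2 = 0 := by
    linear_combination hp / 6 + hm / 6 - h1 / 3
  have key : (α * c α) * (β * c β) = 0 := by
    linear_combination (α ^ 2 * c β) * E2 + (α * (c β) ^ 2) * E1
      - ((α * c α) * (β * c β)) * hn
  rcases mul_eq_zero.mp key with hcase | hcase
  · -- α = 0 : antidiagonal case
    have hα0 : α = 0 := by
      rcases mul_eq_zero.mp hcase with h' | h'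
      · exact h'
      · simpa [hc] using congrArg c h'
    have hcα0 : c α = 0 := by rw [hα0]; simp [hc]
    have hδ0 : (A : Matrix (Fin 2) (Fin 2) ℂ) 1 1 = 0 := by rw [hd, hcα0]
    have hone : β * c β = 1 := by
      rw [hα0] at hn; simpa using hn
    have e : β ^ 3 + (c β) ^ 3 = 0 := by
      linear_combination e1 - e0 - α ^ 2 * hα0 + (c α) ^ 2 * hcα0
    have hβ6 : β ^ 6 = -1 := by
      linear_combination β ^ 3 * e - ((β * c β) ^ 2 + β * c β + 1) * hone
    have hq : (β ^ 2 + 1) * (β ^ 2 + zeta ^ 2) * (β ^ 2 + zeta ^ 4) = 0 := by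
      linear_combination hβ6 + (β ^ 4 + β ^ 2) * hs + (β ^ 2 + 1) * hz6
    have f0 : β ^ 2 + 1 = (β - Complex.I) * (β + Complex.I) := by
      linear_combination Complex.I_sq
    have f1 : β ^ 2 + zeta ^ 2 = (β - Complex.I * zeta) * (β + Complex.I * zeta) := by
      linear_combination zeta ^ 2 * Complex.I_sq
    have f2 : β ^ 2 + zeta ^ 4 = (β - Complex.I * zeta ^ 2) * (β + Complex.I * zeta ^ 2) := by
      linear_combination zeta ^ 4 * Complex.I_sq
    rw [f0, f1, f2] at hq
    have hanti : ∀ k : ℕ, β = Complex.I * zeta ^ k → A ∈ Γ := by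
      intro k hk
      have hA1 : (A : Matrix (Fin 2) (Fin 2) ℂ) = aMat ^ k * bMat := by
        rw [aPow, bMat, Matrix.mul_fin_two]
        ext i j
        fin_cases i <;> fin_cases j
        · show α = zeta ^ k * 0 + 0 * Complex.I
          rw [hα0]; ring
        · show β = zeta ^ k * Complex.I + 0 * 0
          rw [hk]; ring
        · show (A : Matrix (Fin 2) (Fin 2) ℂ) 1 0 = 0 * 0 + (c zeta) ^ k * Complex.I
          rw [hg, hk]
          simp only [hc, _root_.map_mul, _root_.map_pow, Complex.conj_I]
          ring
        · show (A : Matrix (Fin 2) (Fin 2) ℂ) 1 1 = 0 * Complex.I + (c zeta) ^ k * 0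
          rw [hδ0]; ring
      have : A = (⟨aMat, haMem⟩ : SU2) ^ k * (⟨bMat, hbMem⟩ : SU2) := by
        apply Subtype.ext
        rw [MulMemClass.coe_mul, coePow]
        exact hA1
      rw [this]
      exact mul_mem (pow_mem haΓ k) hbΓ
    rcases mul_eq_zero.mp hq with hq' | hq''
    · rcases mul_eq_zero.mp hq' with hq''' | hvalp
      · rcases mul_eq_zero.mp hq''' with hval | hval
        · exact hanti 0 (by linear_combination hval)
        · exact hanti 3 (by linear_combination hval - Complex.I * hz3)
      · rcases mul_eq_zero.mp hvalp with hval | hval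
        · exact hanti 1 (by linear_combination hval)
        · exact hanti 4 (by linear_combination hval - Complex.I * zeta * hz3)
    · rcases mul_eq_zero.mp hq'' with hval | hval
      · exact hanti 2 (by linear_combination hval)
      · exact hanti 5 (by linear_combination hval - Complex.I * zeta ^ 2 * hz3)
  · -- β = 0 : diagonal case
    have hβ0 : β = 0 := by
      rcases mul_eq_zero.mp hcase with h' | h'
      · exact h'
      · simpa [hc] using congrArg c h'
    have hcβ0 : c β = 0 := by rw [hβ0]; simp [hc]
    have hγ0 : (A : Matrix (Fin 2) (Fin 2) ℂ) 1 0 = 0 := by rw [hg, hcβ0]; ring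
    have hone : α * c α = 1 := by
      rw [hβ0] at hn; simpa using hn
    have e : α ^ 3 = (c α) ^ 3 := by
      linear_combination e1 - e0 - β ^ 2 * hβ0 - (c β) ^ 2 * hcβ0
    have hα6 : α ^ 6 = 1 := by
      linear_combination α ^ 3 * e + ((α * c α) ^ 2 + α * c α + 1) * hone
    have hroots : (α - 1) * (α + 1) * ((α - zeta) * (α + zeta))
        * ((α - zeta ^ 2) * (α + zeta ^ 2)) = 0 := by
      linear_combination hα6 + (α ^ 2 - α ^ 4) * hs + (α ^ 2 - 1) * hz6
    have hdiag : ∀ k : ℕ, α = zeta ^ k → A ∈ Γ := by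
      intro k hk
      have hA1 : (A : Matrix (Fin 2) (Fin 2) ℂ) = aMat ^ k := by
        rw [aPow]
        ext i j
        fin_cases i <;> fin_cases j
        · show α = zeta ^ k
          exact hk
        · show β = 0
          exact hβ0
        · show (A : Matrix (Fin 2) (Fin 2) ℂ) 1 0 = 0
          exact hγ0
        · show (A : Matrix (Fin 2) (Fin 2) ℂ) 1 1 = (c zeta) ^ k
          rw [hd, hk, hc, ← map_pow]
      have : A = (⟨aMat, haMem⟩ : SU2) ^ k := by
        apply Subtype.ext
        rw [coePow]
        exact hA1
      rw [this]
      exact pow_mem haΓ k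
    rcases mul_eq_zero.mp hroots with hq' | hq''
    · rcases mul_eq_zero.mp hq' with hq'' | hval
      · rcases mul_eq_zero.mp hq'' with hval | hval
        · exact hdiag 0 (by linear_combination hval)
        · exact hdiag 3 (by linear_combination hval - hz3)
      · rcases mul_eq_zero.mp hval with hval | hval
        · exact hdiag 1 (by linear_combination hval)
        · exact hdiag 4 (by linear_combination hval - zeta * hz3)
    · rcases mul_eq_zero.mp hq'' with hval | hval
      · exact hdiag 2 (by linear_combination hval)
      · exact hdiag 5 (by linear_combination hval - zeta ^ 2 * hz3)

/-- The stabilizer in SU(2) of the point of ℂP³ given by the binary cubic x³ + y³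
is exactly the subgroup Γ generated by a and b. -/
theorem stmt8 :
    ∃ (ha : aMat ∈ Matrix.specialUnitaryGroup (Fin 2) ℂ)
      (hb : bMat ∈ Matrix.specialUnitaryGroup (Fin 2) ℂ),
      ∀ A : Matrix.specialUnitaryGroup (Fin 2) ℂ,
        (∃ l : ℂ, ∀ x y : ℂ,
            (x * (A : Matrix (Fin 2) (Fin 2) ℂ) 0 0 + y * (A : Matrix (Fin 2) (Fin 2) ℂ) 1 0) ^ 3
              + (x * (A : Matrix (Fin 2) (Fin 2) ℂ) 0 1
                  + y * (A : Matrix (Fin 2) (Fin 2) ℂ) 1 1) ^ 3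
              = l * (x ^ 3 + y ^ 3)) ↔
          A ∈ Subgroup.closure
            ({⟨aMat, ha⟩, ⟨bMat, hb⟩} : Set (Matrix.specialUnitaryGroup (Fin 2) ℂ)) := by
  refine ⟨haMem, hbMem, fun A => ⟨fun h => stab_mem A h, fun h => ?_⟩⟩
  refine Subgroup.closure_induction (p := fun g _ => Stab g) ?_ stab_one
    (fun x y _ _ hx hy => stab_mul x y hx hy) (fun x _ hx => stab_inv x hx) h
  rintro x (rfl | rfl)
  · exact stab_a
  · exact stab_b
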